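/- arXiv:2210.12781 — 6 statements merged into one kernel-verified Lean document; each statement's English description precedes it below -/
import Mathlib

section
/- Let K be a field, let n ≥ 2, and let I be the ideal of K[X_0, X_1, …, X_n] generated by F_{i,j} = X_{i-1}·X_{j+1} − X_i·X_j for 1 ≤ i ≤ j ≤ n−1. Then the images in the quotient K[X_0, …, X_n]/I of all distinct monomials of the form X_k^i X_{k+1}^j, where 0 ≤ k ≤ n−1 and i, j ≥ 0, form a K-linear basis of K[X_0, …, X_n]/I. -/
/-!
The substitution `X_l ↦ s t ^ l` kills `I` and sends `X_k ^ i X_{k+1} ^ j` to `s ^ d t ^ e` with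
`d = i + j` and `e = k d + j`. Since `0 ≤ j ≤ d`, the pair `(d, e)` determines the monomial, so
distinct adjacent monomials go to distinct monomials of `K[s, t]` and are linearly independent
modulo `I`. Conversely, modulo `I` one may replace `X_a X_b` by `X_{a+1} X_{b-1}` whenever
`b ≥ a + 2`; this strictly lowers `∑ l²` over the variables of a monomial, so every monomial is
congruent to an adjacent one.
-/

open MvPolynomial Finsupp

section DegreeWeight

variable {σ : Type*} (w : σ → ℕ)

noncomputable def degreeWeight : (σ →₀ ℕ) →+ ℕ × ℕ :=
  degree.prod (weight w)

variable (K : Type*) [CommSemiring K]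

/-- The monomial map `X l ↦ s t ^ w l` into `K[s, t]`, with `K[s, t]` realised as the monoid
algebra of `ℕ × ℕ`. -/
noncomputable def degreeWeightHom : MvPolynomial σ K →ₐ[K] AddMonoidAlgebra K (ℕ × ℕ) :=
  AddMonoidAlgebra.mapDomainAlgHom K K (degreeWeight w)

variable {w K}

theorem degreeWeightHom_monomial (u : σ →₀ ℕ) (c : K) :
    degreeWeightHom w K (monomial u c) = AddMonoidAlgebra.single (degreeWeight w u) c := by
  rw [← single_eq_monomial]
  exact AddMonoidAlgebra.mapDomain_single

theorem degreeWeightHom_X (l : σ) :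
    degreeWeightHom w K (X l) = AddMonoidAlgebra.single (1, w l) 1 := by
  simp [X, degreeWeightHom_monomial, degreeWeight, weight_single]

theorem X_mul_X_sub_X_mul_X_mem_ker_degreeWeightHom {K : Type*} [CommRing K] {a b c d : σ}
    (h : w a + w b = w c + w d) :
    X a * X b - X c * X d ∈ RingHom.ker (degreeWeightHom w K) := by
  simp [RingHom.mem_ker, degreeWeightHom_X, AddMonoidAlgebra.single_mul_single, h]

end DegreeWeight

section Quotient

variable {K : Type*} [CommRing K]

theorem linearIndepOn_image_mk_of_le_ker {A B : Type*} [CommRing A] [Algebra K A] [Semiring B]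
    [Algebra K B] {I : Ideal A} {f : A →ₐ[K] B} (hI : I ≤ RingHom.ker f) {s : Set A}
    (hinj : s.InjOn f) (hs : LinearIndepOn K id (f '' s)) :
    LinearIndepOn K id (Ideal.Quotient.mk I '' s) := by
  set g := Ideal.Quotient.liftₐ I f hI
  have hinj' : (Ideal.Quotient.mk I '' s).InjOn g := by
    rintro _ ⟨a, ha, rfl⟩ _ ⟨b, hb, rfl⟩ h
    rw [hinj ha hb h]
  refine LinearIndepOn.of_comp g.toLinearMap ((linearIndepOn_iff_image hinj').mpr ?_)
  rwa [Set.image_image]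

variable {σ : Type*} {I : Ideal (MvPolynomial σ K)}

theorem mk_monomial_eq_of_X_mul_X_sub_mem {a b c d : σ} (h : X a * X b - X c * X d ∈ I)
    (w : σ →₀ ℕ) :
    Ideal.Quotient.mk I (monomial (w + single a 1 + single b 1) 1) =
      Ideal.Quotient.mk I (monomial (w + single c 1 + single d 1) 1) := by
  refine Ideal.Quotient.eq.mpr ?_
  have : monomial (w + single a 1 + single b 1) (1 : K) - monomial (w + single c 1 + single d 1) 1
      = monomial w 1 * (X a * X b - X c * X d) := by
    simp only [monomial_add_single, pow_one]
    ring
  rw [this]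
  exact I.mul_mem_left _ h

theorem span_eq_top_of_mk_monomial_mem {s : Set (MvPolynomial σ K ⧸ I)}
    (h : ∀ u, Ideal.Quotient.mk I (monomial u 1) ∈ Submodule.span K s) :
    Submodule.span K s = ⊤ := by
  rw [eq_top_iff]
  rintro q -
  obtain ⟨p, rfl⟩ := Ideal.Quotient.mk_surjective q
  induction p using MvPolynomial.induction_on' with
  | monomial u a =>
    rw [← mul_one a, ← smul_eq_mul, ← smul_monomial, ← Ideal.Quotient.mkₐ_eq_mk K, map_smul]
    exact Submodule.smul_mem _ a (h u)
  | add p q hp hq =>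
    rw [map_add]
    exact add_mem hp hq

end Quotient

theorem Finsupp.eq_single_add_single_of_support_subset {α M : Type*} [AddCommMonoid M]
    {f : α →₀ M} {x y : α} (hxy : x ≠ y) (h : ∀ l ∈ f.support, l = x ∨ l = y) :
    f = single x (f x) + single y (f y) := by
  classical
  ext l
  rw [add_apply, Finsupp.single_apply, Finsupp.single_apply]
  split_ifs with hx hy hy
  · exact absurd (hx.trans hy.symm) hxy
  · rw [hx, add_zero]
  · rw [hy, zero_add]
  · by_contra hl
    rcases h l (mem_support_iff.mpr (by simpa using hl)) with rfl | rfl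
    exacts [hx rfl, hy rfl]

theorem Finsupp.exists_eq_add_single_add_single {α : Type*} {u : α →₀ ℕ} {a b : α}
    (ha : a ∈ u.support) (hb : b ∈ u.support) (hab : a ≠ b) :
    ∃ w, u = w + single a 1 + single b 1 := by
  classical
  refine ⟨u - (single a 1 + single b 1), ?_⟩
  rw [add_assoc, tsub_add_cancel_of_le]
  intro l
  rw [mem_support_iff] at ha hb
  simp only [add_apply, Finsupp.single_apply]
  split_ifs <;> subst_vars <;> first | exact absurd rfl hab | omega

theorem Nat.eq_and_eq_zero_of_mul_add_eq {d k k' j j' : ℕ} (hj : j ≤ d) (hk : k < k')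
    (h : k * d + j = k' * d + j') : j = d ∧ j' = 0 ∧ (d = 0 ∨ k' = k + 1) := by
  have hkd : (k + 1) * d ≤ k' * d := Nat.mul_le_mul_right d hk
  have hj : j = d ∧ j' = 0 := by constructor <;> nlinarith
  refine ⟨hj.1, hj.2, ?_⟩
  have : (k + 1) * d = k' * d := by nlinarith
  rcases mul_eq_mul_right_iff.mp this with h | h
  · exact Or.inr h.symm
  · exact Or.inl h

section Veronese

variable {n : ℕ}

theorem degreeWeight_single_castSucc_add_single_succ (k : Fin n) (i j : ℕ) :
    degreeWeight Fin.val (single k.castSucc i + single k.succ j) =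
      (i + j, k * (i + j) + j) := by
  simp [degreeWeight, weight_single]
  ring

theorem single_castSucc_add_single_succ_eq_of_degreeWeight_eq {k k' : Fin n} {i j i' j' : ℕ}
    (h : degreeWeight Fin.val (single k.castSucc i + single k.succ j) =
      degreeWeight Fin.val (single k'.castSucc i' + single k'.succ j')) :
    single k.castSucc i + single k.succ j = single k'.castSucc i' + single k'.succ j' := by
  wlog hkk : k ≤ k' generalizing k k' i j i' j'
  · exact (this h.symm (le_of_not_ge hkk)).symm
  simp only [degreeWeight_single_castSucc_add_single_succ, Prod.mk.injEq] at h
  obtain ⟨hd, he⟩ := h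
  rcases hkk.eq_or_lt with rfl | hlt
  · obtain ⟨rfl, rfl⟩ : i = i' ∧ j = j' := by rw [hd] at he; omega
    rfl
  · rw [← hd] at he
    obtain ⟨hj, hj', hdk⟩ := Nat.eq_and_eq_zero_of_mul_add_eq (by omega) hlt he
    obtain ⟨rfl, rfl, rfl⟩ : i = 0 ∧ j' = 0 ∧ i' = i + j := by omega
    rcases hdk with hd0 | hk'
    · obtain rfl : j = 0 := by omega
      simp
    · have : k.succ = k'.castSucc := Fin.ext (by simp [hk'])
      simp [this]

theorem exists_eq_single_castSucc_add_single_succ (hn : 0 < n) {u : Fin (n + 1) →₀ ℕ}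
    (hu : ∀ a ∈ u.support, ∀ b ∈ u.support, (b : ℕ) < a + 2) :
    ∃ k : Fin n, u = single k.castSucc (u k.castSucc) + single k.succ (u k.succ) := by
  rcases u.support.eq_empty_or_nonempty with hu0 | hne
  · exact ⟨⟨0, hn⟩, by simp [support_eq_empty.mp hu0]⟩
  set a := u.support.min' hne
  -- the `min` covers support `{n}`, written as `X_{n-1} ^ 0 * X_n ^ j`
  refine ⟨⟨min a (n - 1), by omega⟩, eq_single_add_single_of_support_subset
    Fin.castSucc_lt_succ.ne fun l hl => ?_⟩
  have hal : a ≤ l := u.support.min'_le l hl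
  have hla := hu a (u.support.min'_mem hne) l hl
  simp only [Fin.ext_iff, Fin.val_castSucc, Fin.val_succ]
  rw [Fin.le_iff_val_le_val] at hal
  omega

theorem weight_sq_add_single_add_single_lt {w : Fin (n + 1) →₀ ℕ} {a b c d : Fin (n + 1)}
    (hab : (a : ℕ) + 2 ≤ b) (hc : (c : ℕ) = a + 1) (hd : (d : ℕ) + 1 = b) :
    weight (fun l : Fin (n + 1) => (l : ℕ) ^ 2) (w + single c 1 + single d 1) <
      weight (fun l : Fin (n + 1) => (l : ℕ) ^ 2) (w + single a 1 + single b 1) := by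
  simp only [map_add, weight_single, smul_eq_mul, one_mul, hc, ← hd]
  nlinarith

variable (n) in
def adjacentMonomials (K : Type*) [CommSemiring K] : Set (MvPolynomial (Fin (n + 1)) K) :=
  {p | ∃ (k : Fin n) (i j : ℕ), p = X k.castSucc ^ i * X k.succ ^ j}

variable {K : Type*} [CommRing K]

theorem X_castSucc_pow_mul_X_succ_pow (k : Fin n) (i j : ℕ) :
    (X k.castSucc ^ i * X k.succ ^ j : MvPolynomial (Fin (n + 1)) K) =
      monomial (single k.castSucc i + single k.succ j) 1 := by
  rw [X_pow_eq_monomial, X_pow_eq_monomial, monomial_mul, mul_one]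

theorem injOn_degreeWeightHom_adjacentMonomials [Nontrivial K] :
    (adjacentMonomials n K).InjOn (degreeWeightHom Fin.val K) := by
  rintro _ ⟨k, i, j, rfl⟩ _ ⟨k', i', j', rfl⟩ h
  rw [X_castSucc_pow_mul_X_succ_pow, X_castSucc_pow_mul_X_succ_pow] at h ⊢
  rw [degreeWeightHom_monomial, degreeWeightHom_monomial] at h
  rw [single_castSucc_add_single_succ_eq_of_degreeWeight_eq
    (AddMonoidAlgebra.single_left_injective one_ne_zero h)]

theorem linearIndepOn_degreeWeightHom_image_adjacentMonomials [Nontrivial K] :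
    LinearIndepOn K id (degreeWeightHom Fin.val K '' adjacentMonomials n K) := by
  have hsingle :
      LinearIndepOn K id (Set.range fun m : ℕ × ℕ => AddMonoidAlgebra.single m (1 : K)) :=
    (linearIndepOn_id_range_iff (AddMonoidAlgebra.single_left_injective one_ne_zero)).mpr
      (funext (AddMonoidAlgebra.basis_apply K) ▸
        (AddMonoidAlgebra.basis (ℕ × ℕ) K).linearIndependent)
  refine hsingle.mono ?_
  rintro _ ⟨_, ⟨k, i, j, rfl⟩, rfl⟩
  exact ⟨_, by rw [X_castSucc_pow_mul_X_succ_pow, degreeWeightHom_monomial]⟩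

theorem exists_mem_adjacentMonomials_mk_monomial_eq (hn : 0 < n)
    {I : Ideal (MvPolynomial (Fin (n + 1)) K)}
    (hI : ∀ a b : Fin (n + 1), (a : ℕ) + 2 ≤ b →
      ∃ c d : Fin (n + 1), (c : ℕ) = a + 1 ∧ (d : ℕ) + 1 = b ∧ X a * X b - X c * X d ∈ I)
    (u : Fin (n + 1) →₀ ℕ) :
    ∃ p ∈ adjacentMonomials n K, Ideal.Quotient.mk I (monomial u 1) = Ideal.Quotient.mk I p := by
  induction h : weight (fun l : Fin (n + 1) => (l : ℕ) ^ 2) u using Nat.strong_induction_on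
    generalizing u with
  | _ N ih =>
  by_cases hgap : ∃ a ∈ u.support, ∃ b ∈ u.support, (a : ℕ) + 2 ≤ b
  · obtain ⟨a, ha, b, hb, hab⟩ := hgap
    obtain ⟨c, d, hc, hd, hmem⟩ := hI a b hab
    obtain ⟨w, rfl⟩ := exists_eq_add_single_add_single ha hb (by rintro rfl; omega)
    have hlt := weight_sq_add_single_add_single_lt (w := w) hab hc hd
    rw [h] at hlt
    obtain ⟨p, hp, hmk⟩ := ih _ hlt _ rfl
    exact ⟨p, hp, (mk_monomial_eq_of_X_mul_X_sub_mem hmem w).trans hmk⟩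
  · simp only [not_exists, not_and, not_le] at hgap
    obtain ⟨k, hk⟩ := exists_eq_single_castSucc_add_single_succ hn hgap
    refine ⟨_, ⟨k, u k.castSucc, u k.succ, rfl⟩, ?_⟩
    rw [X_castSucc_pow_mul_X_succ_pow, ← hk]

theorem linearIndepOn_image_mk_adjacentMonomials [Nontrivial K]
    {I : Ideal (MvPolynomial (Fin (n + 1)) K)} (hI : I ≤ RingHom.ker (degreeWeightHom Fin.val K)) :
    LinearIndepOn K id (Ideal.Quotient.mk I '' adjacentMonomials n K) :=
  linearIndepOn_image_mk_of_le_ker hI injOn_degreeWeightHom_adjacentMonomials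
    linearIndepOn_degreeWeightHom_image_adjacentMonomials

theorem span_image_mk_adjacentMonomials_eq_top (hn : 0 < n)
    {I : Ideal (MvPolynomial (Fin (n + 1)) K)}
    (hI : ∀ a b : Fin (n + 1), (a : ℕ) + 2 ≤ b →
      ∃ c d : Fin (n + 1), (c : ℕ) = a + 1 ∧ (d : ℕ) + 1 = b ∧ X a * X b - X c * X d ∈ I) :
    Submodule.span K (Ideal.Quotient.mk I '' adjacentMonomials n K) = ⊤ := by
  refine span_eq_top_of_mk_monomial_mem fun u => ?_
  obtain ⟨p, hp, hmk⟩ := exists_mem_adjacentMonomials_mk_monomial_eq hn hI u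
  exact hmk ▸ Submodule.subset_span ⟨p, hp, rfl⟩

end Veronese

/-- The images in `K[X₀,…,Xₙ]/I` of the distinct monomials
`X_k^i X_{k+1}^j` (`0 ≤ k ≤ n-1`, `i, j ≥ 0`), taken as a set, form a `K`-linear basis
of the quotient, where `I` is generated by the `F_{i,j} = X_{i-1} X_{j+1} - X_i X_j`. -/
theorem veronese_quotient_basis (K : Type*) [Field K] (n : ℕ) (hn : 2 ≤ n)
    (I : Ideal (MvPolynomial (Fin (n + 1)) K))
    (hI : I = Ideal.span {f : MvPolynomial (Fin (n + 1)) K |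
      ∃ (i j : ℕ) (_ : 1 ≤ i) (_ : i ≤ j) (_ : j ≤ n - 1),
        f = X (⟨i - 1, by omega⟩ : Fin (n + 1)) * X ⟨j + 1, by omega⟩
          - X ⟨i, by omega⟩ * X ⟨j, by omega⟩})
    (S : Set (MvPolynomial (Fin (n + 1)) K ⧸ I))
    (hS : S = {m | ∃ (k i j : ℕ) (_ : k ≤ n - 1),
      m = Ideal.Quotient.mk I (X (⟨k, by omega⟩ : Fin (n + 1)) ^ i * X ⟨k + 1, by omega⟩ ^ j)}) :
    LinearIndependent K (fun m : S => (m : MvPolynomial (Fin (n + 1)) K ⧸ I)) ∧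
      Submodule.span K S = ⊤ := by
  have hS' : S = Ideal.Quotient.mk I '' adjacentMonomials n K := by
    ext m
    simp only [hS, adjacentMonomials, Set.mem_ofPred_eq, Set.mem_image]
    constructor
    · rintro ⟨k, i, j, hk, rfl⟩
      exact ⟨_, ⟨⟨k, by omega⟩, i, j, rfl⟩, rfl⟩
    · rintro ⟨_, ⟨k, i, j, rfl⟩, rfl⟩
      exact ⟨k, i, j, by omega, rfl⟩
  have hker : I ≤ RingHom.ker (degreeWeightHom Fin.val K) := by
    rw [hI, Ideal.span_le]
    rintro _ ⟨i, j, -, -, -, rfl⟩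
    exact X_mul_X_sub_X_mul_X_mem_ker_degreeWeightHom (by simp only; omega)
  have hstraighten : ∀ a b : Fin (n + 1), (a : ℕ) + 2 ≤ b →
      ∃ c d : Fin (n + 1), (c : ℕ) = a + 1 ∧ (d : ℕ) + 1 = b ∧ X a * X b - X c * X d ∈ I := by
    intro a b hab
    refine ⟨⟨a + 1, by omega⟩, ⟨b - 1, by omega⟩, rfl, by simp only; omega, ?_⟩
    rw [hI]
    refine Ideal.subset_span ⟨a + 1, b - 1, by omega, by omega, by omega, ?_⟩
    congr
    exact Fin.ext (Nat.sub_add_cancel (by omega)).symm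
  subst hS'
  exact ⟨linearIndepOn_image_mk_adjacentMonomials hker,
    span_image_mk_adjacentMonomials_eq_top (by omega) hstraighten⟩
end

section
/- Let K be a field of characteristic zero and n ≥ 2. Let S be a K-derivation of the rational function field K(x,y) such that S(x^{n−i} y^i) ∈ K[x^n, x^{n−1}y, …, x y^{n−1}, y^n] for all 0 ≤ i ≤ n. Then S(x) and S(y) are polynomials, and moreover S(x), S(y) ∈ K[x,y]_1. -/
/-!
Write `x = X 0`, `y = X 1`. For any derivation, the Leibniz rule gives
`yⁿ S(xⁿ) + (n - 1) xⁿ S(yⁿ) = n xⁿ⁻¹ y S(x yⁿ⁻¹)`. By hypothesis the three values of `S` are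
polynomials, so `xⁿ⁻¹` divides `yⁿ S(xⁿ)`, hence `S(xⁿ)` since `x` is prime and `x ∤ y`.
Writing `S(xⁿ) = xⁿ⁻¹ h`, we get `S x = h / n`, a polynomial. All monomials of `S(xⁿ)` have
degree `≡ 0 (mod n)`, so those of `h` have degree `≡ 1`. The same argument with `x` and `y`
exchanged handles `S y`.

The `ℤ/nℤ`-grading is Mathlib's weighted homogeneity with every variable of weight `1 : ZMod n`.
-/

open MvPolynomial

/-- The `i`-th piece (`i ∈ ℤ/nℤ`) of the `n`-grading of `K[x,y]`. -/
noncomputable def gradedPiece (K : Type*) [Field K] (n : ℕ) (i : ZMod n) :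
    Submodule K (MvPolynomial (Fin 2) K) :=
  Submodule.span K {m | ∃ a b : ℕ, ((a + b : ℕ) : ZMod n) = i ∧ m = X 0 ^ a * X 1 ^ b}

/-- The Veronese subalgebra `K[xⁿ, xⁿ⁻¹y, …, xyⁿ⁻¹, yⁿ]` of `K[x,y]`. -/
noncomputable def veronese (K : Type*) [Field K] (n : ℕ) :
    Subalgebra K (MvPolynomial (Fin 2) K) :=
  Algebra.adjoin K {m | ∃ i ≤ n, m = X 0 ^ (n - i) * X 1 ^ i}

theorem Derivation.pow_succ_mul_apply_pow_succ_add {R A : Type*} [CommSemiring R] [CommRing A]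
    [Algebra R A] (D : Derivation R A A) (a b : A) (k : ℕ) :
    b ^ (k + 1) * D (a ^ (k + 1)) + k * a ^ (k + 1) * D (b ^ (k + 1))
      = (k + 1) * a ^ k * b * D (a * b ^ k) := by
  rcases k with _ | k
  · simp
  · simp only [Derivation.leibniz_pow, Derivation.leibniz, Nat.add_sub_cancel, smul_eq_mul,
      nsmul_eq_mul]
    push_cast
    ring

namespace MvPolynomial

variable {σ R M : Type*} [CommSemiring R]

theorem IsWeightedHomogeneous.of_X_pow_mul [AddCancelCommMonoid M] {w : σ → M} {i : σ} {k : ℕ}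
    {φ : MvPolynomial σ R} {m : M} (h : IsWeightedHomogeneous w (X i ^ k * φ) (k • w i + m)) :
    IsWeightedHomogeneous w φ m := by
  intro d hd
  have := h (d := Finsupp.single i k + d) (by rwa [X_pow_eq_monomial, coeff_monomial_mul, one_mul])
  rw [map_add, Finsupp.weight_single] at this
  exact add_left_cancel this

theorem X_pow_dvd_of_dvd_X_pow_mul {R : Type*} [CommRing R] [IsDomain R] {i j : σ} (hij : i ≠ j)
    {k l : ℕ} {p : MvPolynomial σ R} (h : X i ^ k ∣ X j ^ l * p) : X i ^ k ∣ p :=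
  X_prime.pow_dvd_of_dvd_mul_left k
    (fun hdvd => hij (X_dvd_X.mp (X_prime.dvd_of_dvd_pow hdvd))) h

end MvPolynomial

section FinTwo

variable {K : Type*} [Field K]

theorem isWeightedHomogeneous_of_mem_veronese {n : ℕ} {g : MvPolynomial (Fin 2) K}
    (hg : g ∈ veronese K n) : IsWeightedHomogeneous (1 : Fin 2 → ZMod n) g 0 := by
  have := WeightedHomogeneousSubmodule.gradedMonoid (R := K) (w := (1 : Fin 2 → ZMod n))
  refine Algebra.adjoin_le (S := SetLike.GradeZero.subalgebra (weightedHomogeneousSubmodule K 1))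
    ?_ hg
  rintro _ ⟨i, hi, rfl⟩
  have h := ((isWeightedHomogeneous_X K (1 : Fin 2 → ZMod n) 0).pow (n - i)).mul
    ((isWeightedHomogeneous_X K (1 : Fin 2 → ZMod n) 1).pow i)
  rwa [Pi.one_apply, Pi.one_apply, ← add_nsmul, Nat.sub_add_cancel hi, nsmul_one,
    ZMod.natCast_self] at h

theorem mem_gradedPiece_of_isWeightedHomogeneous {n : ℕ} {i : ZMod n}
    {p : MvPolynomial (Fin 2) K} (hp : IsWeightedHomogeneous (1 : Fin 2 → ZMod n) p i) :
    p ∈ gradedPiece K n i := by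
  rw [← p.support_sum_monomial_coeff]
  refine Submodule.sum_mem _ fun d hd => ?_
  have hd' := hp (mem_support_iff.mp hd)
  rw [Finsupp.weight_eq_sum, Fin.sum_univ_two] at hd'
  rw [monomial_eq, Finsupp.prod_fintype _ _ (fun _ => pow_zero _), Fin.prod_univ_two,
    ← smul_eq_C_mul]
  exact Submodule.smul_mem _ _ (Submodule.subset_span ⟨d 0, d 1, by simpa using hd', rfl⟩)

end FinTwo

section FractionField

variable {σ K : Type*} [Field K]

local notation "A" => algebraMap (MvPolynomial σ K) (FractionRing (MvPolynomial σ K))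

theorem exists_isWeightedHomogeneous_derivation_X_eq_algebraMap [CharZero K]
    {M : Type*} [AddCancelCommMonoid M] {w : σ → M} {i j : σ} (hij : i ≠ j) {k : ℕ}
    (hw : (k + 1) • w i = 0)
    (S : Derivation K (FractionRing (MvPolynomial σ K)) (FractionRing (MvPolynomial σ K)))
    {g g' g'' : MvPolynomial σ K} (hg : S (A (X i ^ (k + 1))) = A g)
    (hg' : S (A (X j ^ (k + 1))) = A g') (hg'' : S (A (X i * X j ^ k)) = A g'')
    (hgw : IsWeightedHomogeneous w g 0) :
    ∃ f, IsWeightedHomogeneous w f (w i) ∧ S (A (X i)) = A f := by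
  have hinj : Function.Injective A := IsFractionRing.injective _ _
  have hidentity : X j ^ (k + 1) * g + (k : MvPolynomial σ K) * X i ^ (k + 1) * g'
      = ((k : MvPolynomial σ K) + 1) * X i ^ k * X j * g'' := by
    have := S.pow_succ_mul_apply_pow_succ_add (A (X i)) (A (X j)) k
    rw [map_pow] at hg hg'
    rw [map_mul, map_pow] at hg''
    rw [hg, hg', hg''] at this
    apply hinj
    simpa using this
  obtain ⟨h, rfl⟩ : X i ^ k ∣ g := X_pow_dvd_of_dvd_X_pow_mul (l := k + 1) hij
    (Dvd.intro (((k : MvPolynomial σ K) + 1) * X j * g'' - (k : MvPolynomial σ K) * X i * g')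
      (by linear_combination -hidentity))
  have hS : (k + 1 : FractionRing (MvPolynomial σ K)) * S (A (X i)) = A h := by
    have hXi : A (X i) ^ k ≠ 0 := pow_ne_zero _ ((map_ne_zero_iff A hinj).mpr (X_ne_zero i))
    rw [map_pow, Derivation.leibniz_pow, map_mul, map_pow] at hg
    refine mul_left_cancel₀ hXi ?_
    simpa [smul_eq_mul, nsmul_eq_mul, mul_left_comm] using hg
  refine ⟨C ((k + 1 : K)⁻¹) * h, ?_, ?_⟩
  · rw [← hw, succ_nsmul] at hgw
    exact hgw.of_X_pow_mul.C_mul _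
  · have hAC : A (C ((k + 1 : K)⁻¹)) = (k + 1 : FractionRing (MvPolynomial σ K))⁻¹ := by
      rw [← algebraMap_eq, ← IsScalarTower.algebraMap_apply]
      simp
    rw [map_mul, hAC, ← hS, inv_mul_cancel_left₀ (Nat.cast_add_one_ne_zero k)]

end FractionField

set_option synthInstance.maxHeartbeats 1000000 in
/-- If a `K`-derivation `S` of `K(x,y)` sends every `x^{n-i} y^i`
(`0 ≤ i ≤ n`) into `K[xⁿ, …, yⁿ]`, then `S x` and `S y` are polynomials lying
in `K[x,y]₁`. -/
theorem derivation_fraction_field_polynomial (K : Type*) [Field K] [CharZero K]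
    (n : ℕ) (hn : 2 ≤ n)
    (S : Derivation K (FractionRing (MvPolynomial (Fin 2) K))
      (FractionRing (MvPolynomial (Fin 2) K)))
    (h : ∀ i ≤ n, ∃ g ∈ veronese K n,
      S (algebraMap (MvPolynomial (Fin 2) K) (FractionRing (MvPolynomial (Fin 2) K))
          (X 0 ^ (n - i) * X 1 ^ i))
        = algebraMap (MvPolynomial (Fin 2) K) (FractionRing (MvPolynomial (Fin 2) K)) g) :
    (∃ f ∈ gradedPiece K n 1,
      S (algebraMap (MvPolynomial (Fin 2) K) (FractionRing (MvPolynomial (Fin 2) K)) (X 0))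
        = algebraMap (MvPolynomial (Fin 2) K) (FractionRing (MvPolynomial (Fin 2) K)) f) ∧
    (∃ f ∈ gradedPiece K n 1,
      S (algebraMap (MvPolynomial (Fin 2) K) (FractionRing (MvPolynomial (Fin 2) K)) (X 1))
        = algebraMap (MvPolynomial (Fin 2) K) (FractionRing (MvPolynomial (Fin 2) K)) f) := by
  obtain ⟨k, rfl⟩ : ∃ k, n = k + 1 := ⟨n - 1, by omega⟩
  obtain ⟨gx, hgx, ex⟩ := h 0 (Nat.zero_le _)
  obtain ⟨gy, hgy, ey⟩ := h (k + 1) le_rfl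
  obtain ⟨gxy, -, exy⟩ := h k (by omega)
  obtain ⟨gyx, -, eyx⟩ := h 1 (by omega)
  simp only [Nat.sub_zero, Nat.sub_self, Nat.add_sub_cancel, Nat.add_sub_cancel_left, pow_zero,
    pow_one, mul_one, one_mul] at ex ey exy eyx
  rw [mul_comm] at eyx
  have hw : ∀ i, (k + 1) • (1 : Fin 2 → ZMod (k + 1)) i = 0 := fun _ => by
    rw [Pi.one_apply, nsmul_one, ZMod.natCast_self]
  obtain ⟨fx, hfx, hSx⟩ := exists_isWeightedHomogeneous_derivation_X_eq_algebraMap (by decide)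
    (hw 0) S ex ey exy (isWeightedHomogeneous_of_mem_veronese hgx)
  obtain ⟨fy, hfy, hSy⟩ := exists_isWeightedHomogeneous_derivation_X_eq_algebraMap (by decide)
    (hw 1) S ey ex eyx (isWeightedHomogeneous_of_mem_veronese hgy)
  exact ⟨⟨fx, mem_gradedPiece_of_isWeightedHomogeneous hfx, hSx⟩,
    ⟨fy, mem_gradedPiece_of_isWeightedHomogeneous hfy, hSy⟩⟩
end

section
/- Let K be a field of characteristic zero and n ≥ 2. Let D̃ be an n-graded K-derivation of K[x,y] that maps the subalgebra K[x^n, x^{n−1}y, …, x y^{n−1}, y^n] into itself. If the restriction of D̃ to K[x^n, x^{n−1}y, …, x y^{n−1}, y^n] is locally nilpotent, then D̃ is a locally nilpotent derivation of K[x,y]. -/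
/-!
Call `a` the `D`-degree of `f` when `D^[a] f ≠ 0 = D^[a+1] f`; in a domain of characteristic
zero it is additive on products. An `n`-graded derivation preserves the piece `K[x,y]_1`, and
`n`-th powers of elements of that piece lie in `K[xⁿ, …, yⁿ]`, so they have a `D`-degree.
For `g` in the piece, `D (gⁿ) = n gⁿ⁻¹ D g`, and comparing the degrees of both sides of
`(D (gⁿ))ⁿ = nⁿ (gⁿ)ⁿ⁻¹ (D g)ⁿ` gives `deg (gⁿ) = deg ((D g)ⁿ) + n`. Induction on `deg (gⁿ)`
then shows that `x` and `y` are killed by powers of `D`, and the elements killed by a power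
of `D` form a subalgebra.
-/

open MvPolynomial

namespace Derivation

open Finset

variable {R A : Type*} [CommSemiring R] [CommSemiring A] [Algebra R A] (D : Derivation R A A)

theorem iterate_map_mul (n : ℕ) (a b : A) :
    D^[n] (a * b) = ∑ ij ∈ antidiagonal n, n.choose ij.1 • (D^[ij.1] a * D^[ij.2] b) := by
  induction n with
  | zero => simp
  | succ n ih =>
    rw [sum_antidiagonal_choose_succ_nsmul (fun i j => D^[i] a * D^[j] b) n]
    simp only [Function.iterate_succ_apply', ih, map_sum, map_nsmul, leibniz, smul_eq_mul,
      smul_add, sum_add_distrib]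
    congr 1
    refine sum_congr rfl fun ⟨i, j⟩ hij => ?_
    rw [n.choose_symm_of_eq_add (mem_antidiagonal.1 hij).symm, mul_comm]

variable {D}

theorem iterate_eq_zero_of_le {f : A} {k l : ℕ} (h : D^[k] f = 0) (hkl : k ≤ l) :
    D^[l] f = 0 := by
  obtain ⟨j, rfl⟩ := Nat.exists_eq_add_of_le hkl
  rw [add_comm, Function.iterate_add_apply, h, iterate_map_zero]

theorem iterate_mul_eq_zero {f g : A} {a b : ℕ} (hf : D^[a + 1] f = 0) (hg : D^[b + 1] g = 0) :
    D^[a + b + 1] (f * g) = 0 := by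
  rw [iterate_map_mul]
  refine sum_eq_zero fun ⟨i, j⟩ hij => ?_
  rcases le_or_gt (a + 1) i with hi | hi
  · rw [iterate_eq_zero_of_le hf hi, zero_mul, smul_zero]
  · have hj : b + 1 ≤ j := by have := mem_antidiagonal.1 hij; simp only at this; omega
    rw [iterate_eq_zero_of_le hg hj, mul_zero, smul_zero]

theorem iterate_mul_of_iterate_succ_eq_zero {f g : A} {a b : ℕ} (hf : D^[a + 1] f = 0)
    (hg : D^[b + 1] g = 0) :
    D^[a + b] (f * g) = (a + b).choose a • (D^[a] f * D^[b] g) := by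
  rw [iterate_map_mul, sum_eq_single (a, b)]
  · rintro ⟨i, j⟩ hij hne
    have hij := mem_antidiagonal.1 hij
    simp only at hij
    rcases le_or_gt (a + 1) i with hi | hi
    · rw [iterate_eq_zero_of_le hf hi, zero_mul, smul_zero]
    · have hj : b + 1 ≤ j := by
        by_contra
        exact hne (Prod.ext (by omega) (by omega))
      rw [iterate_eq_zero_of_le hg hj, mul_zero, smul_zero]
  · simp

variable (D) in
def nilSubalgebra : Subalgebra R A where
  carrier := {f | ∃ m, D^[m] f = 0}
  mul_mem' := by
    rintro f g ⟨a, ha⟩ ⟨b, hb⟩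
    exact ⟨a + b + 1, iterate_mul_eq_zero (iterate_eq_zero_of_le ha a.le_succ)
      (iterate_eq_zero_of_le hb b.le_succ)⟩
  add_mem' := by
    rintro f g ⟨a, ha⟩ ⟨b, hb⟩
    refine ⟨max a b, ?_⟩
    rw [iterate_map_add, iterate_eq_zero_of_le ha (le_max_left a b),
      iterate_eq_zero_of_le hb (le_max_right a b), add_zero]
  algebraMap_mem' r := ⟨1, D.map_algebraMap r⟩

variable (D) in
def HasNilDegree (f : A) (a : ℕ) : Prop :=
  D^[a] f ≠ 0 ∧ D^[a + 1] f = 0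

theorem HasNilDegree.unique {f : A} {a b : ℕ} (ha : HasNilDegree D f a)
    (hb : HasNilDegree D f b) : a = b := by
  by_contra h
  rcases Nat.lt_or_gt_of_ne h with hlt | hgt
  · exact hb.1 (iterate_eq_zero_of_le ha.2 hlt)
  · exact ha.1 (iterate_eq_zero_of_le hb.2 hgt)

theorem exists_hasNilDegree {f : A} (hf : f ≠ 0) (h : ∃ m, D^[m] f = 0) :
    ∃ a, HasNilDegree D f a := by
  classical
  obtain ⟨a, ha⟩ : ∃ a, Nat.find h = a + 1 :=
    Nat.exists_eq_add_one.2 (Nat.pos_of_ne_zero fun h0 => hf (by simpa [h0] using Nat.find_spec h))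
  exact ⟨a, Nat.find_min h (by omega), ha ▸ Nat.find_spec h⟩

theorem hasNilDegree_succ_iff {f : A} {a : ℕ} :
    HasNilDegree D f (a + 1) ↔ HasNilDegree D (D f) a := by
  simp only [HasNilDegree, Function.iterate_succ_apply]

section CharZero

variable [NoZeroDivisors A] [CharZero A]

theorem HasNilDegree.mul {f g : A} {a b : ℕ} (hf : HasNilDegree D f a)
    (hg : HasNilDegree D g b) : HasNilDegree D (f * g) (a + b) := by
  refine ⟨?_, iterate_mul_eq_zero hf.2 hg.2⟩
  rw [iterate_mul_of_iterate_succ_eq_zero hf.2 hg.2, nsmul_eq_mul]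
  exact mul_ne_zero (Nat.cast_ne_zero.2 (Nat.choose_pos le_self_add).ne') (mul_ne_zero hf.1 hg.1)

theorem HasNilDegree.pow {f : A} {a : ℕ} (hf : HasNilDegree D f a) (k : ℕ) :
    HasNilDegree D (f ^ k) (k * a) := by
  induction k with
  | zero => simp [HasNilDegree]
  | succ k ih => simpa [pow_succ, add_mul] using ih.mul hf

theorem HasNilDegree.nsmul {f : A} {a c : ℕ} (hf : HasNilDegree D f a) (hc : c ≠ 0) :
    HasNilDegree D (c • f) a := by
  rw [HasNilDegree, iterate_map_nsmul, iterate_map_nsmul, hf.2, smul_zero, nsmul_eq_mul]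
  exact ⟨mul_ne_zero (Nat.cast_ne_zero.2 hc) hf.1, rfl⟩

theorem HasNilDegree.eq_add_of_pow {g : A} {n a b : ℕ} (hn : 0 < n) (hDg : D g ≠ 0)
    (ha : HasNilDegree D (g ^ n) a) (hb : HasNilDegree D (D g ^ n) b) : a = b + n := by
  have hg : g ≠ 0 := fun h => hDg (by rw [h, map_zero])
  have hDu : D (g ^ n) = n • (g ^ (n - 1) * D g) := by rw [leibniz_pow, smul_eq_mul]
  have hDu0 : D (g ^ n) ≠ 0 := by
    rw [hDu, nsmul_eq_mul]
    exact mul_ne_zero (Nat.cast_ne_zero.2 hn.ne') (mul_ne_zero (pow_ne_zero _ hg) hDg)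
  obtain ⟨c, rfl⟩ : ∃ c, a = c + 1 :=
    Nat.exists_eq_add_one.2 (Nat.pos_of_ne_zero fun h0 => hDu0 (by simpa [h0] using ha.2))
  have hc : HasNilDegree D (D (g ^ n)) c := hasNilDegree_succ_iff.1 ha
  have hpow : D (g ^ n) ^ n = n ^ n • ((g ^ n) ^ (n - 1) * D g ^ n) := by
    rw [hDu, smul_pow, mul_pow, ← pow_mul, ← pow_mul, Nat.mul_comm]
  have h := (hc.pow n).unique (hpow ▸ ((ha.pow (n - 1)).mul hb).nsmul (pow_ne_zero n hn.ne'))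
  obtain ⟨m, rfl⟩ := Nat.exists_eq_add_one.2 hn
  rw [Nat.add_sub_cancel] at h
  linarith

theorem mem_nilSubalgebra_of_pow {S : Set A} {n : ℕ} (hn : 0 < n) (hS : ∀ g ∈ S, D g ∈ S)
    (hpow : ∀ g ∈ S, g ^ n ∈ D.nilSubalgebra) {g : A} (hg : g ∈ S) : g ∈ D.nilSubalgebra := by
  by_cases hg0 : g = 0
  · exact hg0 ▸ zero_mem _
  obtain ⟨a, ha⟩ := exists_hasNilDegree (pow_ne_zero n hg0) (hpow g hg)
  induction a using Nat.strong_induction_on generalizing g with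
  | _ a ih =>
  by_cases hDg : D g = 0
  · exact ⟨1, hDg⟩
  obtain ⟨b, hb⟩ := exists_hasNilDegree (pow_ne_zero n hDg) (hpow _ (hS g hg))
  obtain ⟨m, hm⟩ := ih b (by have := ha.eq_add_of_pow hn hDg hb; omega) (hS g hg) hDg hb
  exact ⟨m + 1, by rwa [Function.iterate_succ_apply]⟩

end CharZero

end Derivation

section Grading

variable {K : Type*} [Field K] {n : ℕ}

theorem X_pow_mul_X_pow_mem_gradedPiece {i : ZMod n} {a b : ℕ} (h : ((a + b : ℕ) : ZMod n) = i) :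
    (X 0 ^ a * X 1 ^ b : MvPolynomial (Fin 2) K) ∈ gradedPiece K n i :=
  Submodule.subset_span ⟨a, b, h, rfl⟩

theorem X_pow_mem_gradedPiece (k : Fin 2) (a : ℕ) :
    (X k ^ a : MvPolynomial (Fin 2) K) ∈ gradedPiece K n a := by
  fin_cases k
  · simpa using X_pow_mul_X_pow_mem_gradedPiece (K := K) (b := 0) (i := (a : ZMod n)) (by simp)
  · simpa using X_pow_mul_X_pow_mem_gradedPiece (K := K) (a := 0) (i := (a : ZMod n)) (by simp)

theorem mul_mem_gradedPiece {i j : ZMod n} {f g : MvPolynomial (Fin 2) K}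
    (hf : f ∈ gradedPiece K n i) (hg : g ∈ gradedPiece K n j) :
    f * g ∈ gradedPiece K n (i + j) := by
  refine (show gradedPiece K n i * gradedPiece K n j ≤ gradedPiece K n (i + j) from ?_)
    (Submodule.mul_mem_mul hf hg)
  rw [gradedPiece, gradedPiece, Submodule.span_mul_span, Submodule.span_le]
  rintro _ ⟨_, ⟨a, b, rfl, rfl⟩, _, ⟨c, d, rfl, rfl⟩, rfl⟩
  dsimp only
  rw [show (X 0 ^ a * X 1 ^ b * (X 0 ^ c * X 1 ^ d) : MvPolynomial (Fin 2) K) =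
    X 0 ^ (a + c) * X 1 ^ (b + d) by ring]
  exact X_pow_mul_X_pow_mem_gradedPiece (by push_cast; ring)

theorem pow_mem_gradedPiece {i : ZMod n} {f : MvPolynomial (Fin 2) K}
    (hf : f ∈ gradedPiece K n i) (k : ℕ) : f ^ k ∈ gradedPiece K n (k • i) := by
  induction k with
  | zero => simpa using X_pow_mem_gradedPiece (K := K) (n := n) 0 0
  | succ k ih => rw [pow_succ, succ_nsmul]; exact mul_mem_gradedPiece ih hf

theorem Derivation.map_mem_gradedPiece
    (D : Derivation K (MvPolynomial (Fin 2) K) (MvPolynomial (Fin 2) K))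
    (hD : ∀ k, D (X k) ∈ gradedPiece K n 1) {i : ZMod n} {f : MvPolynomial (Fin 2) K}
    (hf : f ∈ gradedPiece K n i) : D f ∈ gradedPiece K n i := by
  have hpow : ∀ (k : Fin 2) (a : ℕ), D (X k ^ a) ∈ gradedPiece K n a := by
    rintro k (_ | a)
    · simp
    · rw [D.leibniz_pow, Nat.add_sub_cancel, smul_eq_mul]
      exact Submodule.smul_of_tower_mem _ _
        (by simpa using mul_mem_gradedPiece (X_pow_mem_gradedPiece k a) (hD k))
  induction hf using Submodule.span_induction with
  | mem m hm =>
    obtain ⟨a, b, rfl, rfl⟩ := hm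
    rw [D.leibniz, smul_eq_mul, smul_eq_mul, Nat.cast_add]
    exact add_mem (mul_mem_gradedPiece (X_pow_mem_gradedPiece 0 a) (hpow 1 b))
      (add_comm (b : ZMod n) a ▸ mul_mem_gradedPiece (X_pow_mem_gradedPiece 1 b) (hpow 0 a))
  | zero => simp
  | add f g _ _ hf hg => simpa using add_mem hf hg
  | smul c f _ hf => simpa using Submodule.smul_mem _ c hf

theorem X_pow_mul_X_pow_mem_veronese {a b : ℕ} (h : n ∣ a + b) :
    (X 0 ^ a * X 1 ^ b : MvPolynomial (Fin 2) K) ∈ veronese K n := by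
  obtain ⟨k, hk⟩ := h
  induction k generalizing a b with
  | zero =>
    obtain ⟨rfl, rfl⟩ : a = 0 ∧ b = 0 := by simpa using hk
    simp [one_mem]
  | succ k ih =>
    rw [Nat.mul_succ] at hk
    have hgen : (X 0 ^ min a n * X 1 ^ (n - min a n) : MvPolynomial (Fin 2) K) ∈ veronese K n :=
      Algebra.subset_adjoin
        ⟨n - min a n, Nat.sub_le n _, by rw [Nat.sub_sub_self (min_le_right a n)]⟩
    have hrest := ih (a := a - min a n) (b := b - (n - min a n)) (by omega)
    convert mul_mem hgen hrest using 1
    rw [mul_mul_mul_comm, ← pow_add, ← pow_add, Nat.add_sub_cancel' (min_le_left a n),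
      Nat.add_sub_cancel' (by omega : n - min a n ≤ b)]

theorem mem_veronese_of_mem_gradedPiece_zero {f : MvPolynomial (Fin 2) K}
    (hf : f ∈ gradedPiece K n 0) : f ∈ veronese K n := by
  induction hf using Submodule.span_induction with
  | mem m hm =>
    obtain ⟨a, b, hab, rfl⟩ := hm
    exact X_pow_mul_X_pow_mem_veronese ((ZMod.natCast_eq_zero_iff _ _).1 hab)
  | zero => exact zero_mem _
  | add f g _ _ hf hg => exact add_mem hf hg
  | smul c f _ hf => exact Subalgebra.smul_mem _ hf c

theorem pow_mem_veronese {f : MvPolynomial (Fin 2) K} (hf : f ∈ gradedPiece K n 1) :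
    f ^ n ∈ veronese K n :=
  mem_veronese_of_mem_gradedPiece_zero (by simpa using pow_mem_gradedPiece hf n)

end Grading

theorem locally_nilpotent_of_restriction_general (K : Type*) [Field K] [CharZero K]
    (n : ℕ) (hn : 2 ≤ n)
    (D : Derivation K (MvPolynomial (Fin 2) K) (MvPolynomial (Fin 2) K))
    (hgr : D (X 0) ∈ gradedPiece K n 1 ∧ D (X 1) ∈ gradedPiece K n 1)
    (hln : ∀ f ∈ veronese K n, ∃ m : ℕ, 0 < m ∧ (D.toLinearMap ^ m) f = 0) :
    ∀ f : MvPolynomial (Fin 2) K, ∃ m : ℕ, 0 < m ∧ (D.toLinearMap ^ m) f = 0 := by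
  have hX : ∀ k, D (X k) ∈ gradedPiece K n 1 := by
    intro k
    fin_cases k
    exacts [hgr.1, hgr.2]
  have hpow (g : MvPolynomial (Fin 2) K) (hg : g ∈ gradedPiece K n 1) :
      g ^ n ∈ D.nilSubalgebra := by
    obtain ⟨m, -, hm⟩ := hln _ (pow_mem_veronese hg)
    exact ⟨m, by rwa [Module.End.pow_apply, Derivation.coeFn_coe] at hm⟩
  have hnil : D.nilSubalgebra = ⊤ := by
    rw [eq_top_iff, ← adjoin_range_X, Algebra.adjoin_le_iff]
    rintro _ ⟨k, rfl⟩
    exact D.mem_nilSubalgebra_of_pow (by omega) (fun g => D.map_mem_gradedPiece hX)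
      hpow (by simpa using X_pow_mem_gradedPiece (K := K) (n := n) k 1)
  intro f
  obtain ⟨m, hm⟩ := hnil ▸ Algebra.mem_top (x := f)
  exact ⟨m + 1, m.succ_pos, by
    rw [Module.End.pow_apply, Derivation.coeFn_coe, Function.iterate_succ_apply', hm, map_zero]⟩

/-- An `n`-graded derivation of `K[x,y]` preserving
`K[xⁿ, …, yⁿ]` whose restriction to `K[xⁿ, …, yⁿ]` is locally nilpotent is itself
locally nilpotent on `K[x,y]`. -/
theorem locally_nilpotent_of_restriction (K : Type*) [Field K] [CharZero K]
    (n : ℕ) (hn : 2 ≤ n)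
    (D : Derivation K (MvPolynomial (Fin 2) K) (MvPolynomial (Fin 2) K))
    (hgr : D (X 0) ∈ gradedPiece K n 1 ∧ D (X 1) ∈ gradedPiece K n 1)
    (hmap : ∀ f ∈ veronese K n, D f ∈ veronese K n)
    (hln : ∀ f ∈ veronese K n, ∃ m : ℕ, 0 < m ∧ (D.toLinearMap ^ m) f = 0) :
    ∀ f : MvPolynomial (Fin 2) K, ∃ m : ℕ, 0 < m ∧ (D.toLinearMap ^ m) f = 0 :=
  locally_nilpotent_of_restriction_general K n hn D hgr hln
end

section
/- Let K be a field of characteristic zero and n ≥ 2. If p ∈ K[x,y] satisfies p^n ∈ K[x,y]_0 (i.e., every monomial of p^n has total degree divisible by n), then there exists i ∈ ℤ/nℤ such that p ∈ K[x,y]_i (i.e., every monomial of p has total degree ≡ i (mod n)). -/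
/-!
After extending scalars to a cyclotomic field, let `ζ` be a primitive `n`-th root of unity and
`φ` the substitution `x ↦ ζx, y ↦ ζy`, which multiplies a monomial of degree `d` by `ζ ^ d`.
The hypothesis says that `φ` fixes `pⁿ`, so `(φ p)ⁿ = pⁿ`; since `aⁿ - bⁿ = ∏ (a - ζ ^ j b)` in a
domain, `φ p = ζ ^ i p` for some `i`, and comparing coefficients shows that every monomial of `p`
has degree `≡ i (mod n)`.
-/

open MvPolynomial

theorem IsPrimitiveRoot.pow_eq_pow_iff_natCast_eq {M : Type*} [CommMonoid M] {ζ : M} {n : ℕ}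
    [NeZero n] (hζ : IsPrimitiveRoot ζ n) {a b : ℕ} : ζ ^ a = ζ ^ b ↔ (a : ZMod n) = b := by
  rw [(hζ.isOfFinOrder (NeZero.ne n)).pow_eq_pow_iff_modEq, ← hζ.eq_orderOf,
    ZMod.natCast_eq_natCast_iff]

theorem IsPrimitiveRoot.exists_eq_pow_mul_of_pow_eq_pow {R : Type*} [CommRing R] [IsDomain R]
    {ζ : R} {n : ℕ} [NeZero n] (hζ : IsPrimitiveRoot ζ n) {a b : R} (h : a ^ n = b ^ n) :
    ∃ i < n, a = ζ ^ i * b := by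
  have hprod := hζ.pow_sub_pow_eq_prod_sub_mul a b (NeZero.pos n)
  rw [h, sub_self, eq_comm, Finset.prod_eq_zero_iff] at hprod
  obtain ⟨μ, hμ, hμ_root⟩ := hprod
  obtain ⟨i, hi, rfl⟩ :=
    hζ.eq_pow_of_pow_eq_one ((Polynomial.mem_nthRootsFinset (NeZero.pos n) 1).1 hμ)
  exact ⟨i, hi, sub_eq_zero.1 hμ_root⟩

namespace MvPolynomial

variable {σ R : Type*}

theorem coeff_aeval_C_mul_X [CommSemiring R] (c : R) (p : MvPolynomial σ R) (m : σ →₀ ℕ) :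
    coeff m (aeval (fun i ↦ C c * X i) p) = c ^ m.degree * coeff m p := by
  classical
  induction p using MvPolynomial.induction_on' with
  | monomial d r =>
    have hC : (d.prod fun _ k ↦ C c ^ k) = (C (c ^ d.degree) : MvPolynomial σ R) := by
      rw [Finsupp.prod, Finset.prod_pow_eq_pow_sum, Finsupp.degree_apply, map_pow]
    have hmonomial : aeval (fun i ↦ C c * X i) (monomial d r) = monomial d (c ^ d.degree * r) := by
      rw [aeval_monomial, monomial_eq, algebraMap_eq, map_mul, ← hC]
      simp only [mul_pow, Finsupp.prod_mul]
      ring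
    rw [hmonomial, coeff_monomial, coeff_monomial]
    split_ifs with hdm
    · rw [hdm]
    · rw [mul_zero]
  | add p q hp hq => rw [map_add, coeff_add, coeff_add, hp, hq, mul_add]

theorem aeval_C_mul_X_eq_C_pow_mul_iff [CommRing R] [IsDomain R] (c : R) (k : ℕ)
    (p : MvPolynomial σ R) :
    aeval (fun i ↦ C c * X i) p = C (c ^ k) * p ↔ ∀ m ∈ p.support, c ^ m.degree = c ^ k := by
  simp only [MvPolynomial.ext_iff, coeff_aeval_C_mul_X, coeff_C_mul, mem_support_iff]
  refine forall_congr' fun m ↦ ⟨fun h hm ↦ mul_right_cancel₀ hm h, fun h ↦ ?_⟩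
  by_cases hm : coeff m p = 0
  · rw [hm, mul_zero, mul_zero]
  · rw [h hm]

theorem exists_natCast_degree_eq_of_isPrimitiveRoot [CommRing R] [IsDomain R] {ζ : R} {n : ℕ}
    [NeZero n] (hζ : IsPrimitiveRoot ζ n) {p : MvPolynomial σ R}
    (hp : ∀ m ∈ (p ^ n).support, (m.degree : ZMod n) = 0) :
    ∃ i : ZMod n, ∀ m ∈ p.support, (m.degree : ZMod n) = i := by
  have hfix : aeval (fun i ↦ C ζ * X i) (p ^ n) = C (ζ ^ 0) * p ^ n :=
    (aeval_C_mul_X_eq_C_pow_mul_iff ζ 0 _).2 fun m hm ↦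
      hζ.pow_eq_pow_iff_natCast_eq.2 (by rw [hp m hm, Nat.cast_zero])
  rw [pow_zero, map_one, one_mul, map_pow] at hfix
  obtain ⟨i, -, hi⟩ :=
    (hζ.map_of_injective (C_injective σ R)).exists_eq_pow_mul_of_pow_eq_pow hfix
  rw [← map_pow, aeval_C_mul_X_eq_C_pow_mul_iff] at hi
  exact ⟨i, fun m hm ↦ hζ.pow_eq_pow_iff_natCast_eq.1 (hi m hm)⟩

theorem exists_natCast_degree_eq_of_pow {K : Type*} [Field K] {n : ℕ} [NeZero (n : K)]
    {p : MvPolynomial σ K} (hp : ∀ m ∈ (p ^ n).support, (m.degree : ZMod n) = 0) :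
    ∃ i : ZMod n, ∀ m ∈ p.support, (m.degree : ZMod n) = i := by
  have : NeZero n := NeZero.of_neZero_natCast K
  let L := CyclotomicField n K
  have hinj := (algebraMap K L).injective
  have hL := exists_natCast_degree_eq_of_isPrimitiveRoot (IsCyclotomicExtension.zeta_spec n K L)
    (p := map (algebraMap K L) p) (by rwa [← map_pow, support_map_of_injective _ hinj])
  rwa [support_map_of_injective _ hinj] at hL

end MvPolynomial

theorem gradedPiece_eq_restrictSupport (K : Type*) [Field K] (n : ℕ) (i : ZMod n) :
    gradedPiece K n i = restrictSupport K {m | (m.degree : ZMod n) = i} := by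
  have hX (m : Fin 2 →₀ ℕ) : monomial m (1 : K) = X 0 ^ m 0 * X 1 ^ m 1 := by
    rw [monomial_eq, map_one, one_mul, Finsupp.prod_fintype _ _ fun _ ↦ pow_zero _,
      Fin.prod_univ_two]
  rw [gradedPiece, restrictSupport_eq_span]
  congr 1
  ext q
  simp only [Set.mem_ofPred_eq, Set.mem_image, Finsupp.degree_eq_sum, Fin.sum_univ_two]
  constructor
  · rintro ⟨a, b, hab, rfl⟩
    exact ⟨Finsupp.single 0 a + Finsupp.single 1 b, by simpa using hab, by simp [hX]⟩
  · rintro ⟨m, hm, rfl⟩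
    exact ⟨m 0, m 1, hm, hX m⟩

/-- If `p ∈ K[x,y]` satisfies `pⁿ ∈ K[x,y]₀`, then `p ∈ K[x,y]ᵢ` for
some `i ∈ ℤ/nℤ`. -/
theorem graded_of_pow_graded (K : Type*) [Field K] [CharZero K] (n : ℕ) (hn : 2 ≤ n)
    (p : MvPolynomial (Fin 2) K) (hp : p ^ n ∈ gradedPiece K n 0) :
    ∃ i : ZMod n, p ∈ gradedPiece K n i := by
  have : NeZero (n : K) := ⟨Nat.cast_ne_zero.2 (by omega)⟩
  simp only [gradedPiece_eq_restrictSupport, mem_restrictSupport_iff, Set.subset_def,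
    Finset.mem_coe, Set.mem_ofPred_eq] at hp ⊢
  exact exists_natCast_degree_eq_of_pow hp
end

section
/- Let K be a field and let u ∈ K[x,y], n ≥ 1. If both x^n and y^n lie in K + (u), where (u) is the ideal of K[x,y] generated by u, then u is a nonzero constant (a unit of K[x,y]). -/
open MvPolynomial

/-- Auxiliary: if `u` divides `X 1 ^ n - C c` (with `n ≥ 1`) in `K[x,y]`, then the
degree of `u` in the variable `0` is zero. -/
lemma aux_degreeOf_zero (K : Type*) [Field K] (n : ℕ) (hn : 1 ≤ n)
    (u h : MvPolynomial (Fin 2) K) (c : K)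
    (heq : (X 1 : MvPolynomial (Fin 2) K) ^ n = C c + u * h) :
    degreeOf 0 u = 0 := by
  classical
  have huh : u * h = (X 1 : MvPolynomial (Fin 2) K) ^ n - C c := by
    rw [heq]; ring
  -- apply finSuccEquiv
  set φ := finSuccEquiv K 1 with hφ
  have h1 : (1 : Fin 2) = Fin.succ 0 := rfl
  have hmap : φ u * φ h = Polynomial.C ((X 0 : MvPolynomial (Fin 1) K) ^ n - C c) := by
    have hC : φ (C c) = Polynomial.C (C c) := by
      simp [hφ, finSuccEquiv_apply]
    rw [← map_mul, huh, map_sub, map_pow, h1, finSuccEquiv_X_succ, hC, ← map_pow, ← map_sub]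
  have hne : ((X 0 : MvPolynomial (Fin 1) K) ^ n - C c) ≠ 0 := by
    intro h0
    have : (X 0 : MvPolynomial (Fin 1) K) ^ n = C c := by
      rw [sub_eq_zero] at h0; exact h0
    have ht := congrArg totalDegree this
    rw [totalDegree_C, totalDegree_X_pow] at ht
    omega
  have hune : φ u ≠ 0 := by
    intro h0
    apply hne
    have := hmap
    rw [h0, zero_mul] at this
    exact (Polynomial.C_eq_zero.mp this.symm)
  have hhne : φ h ≠ 0 := by
    intro h0
    apply hne
    have := hmap
    rw [h0, mul_zero] at this
    exact (Polynomial.C_eq_zero.mp this.symm)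
  have hdeg : (φ u).natDegree + (φ h).natDegree = 0 := by
    rw [← Polynomial.natDegree_mul hune hhne, hmap, Polynomial.natDegree_C]
  have : (φ u).natDegree = 0 := by omega
  rw [← natDegree_finSuccEquiv u]
  exact this

/-- If `xⁿ` and `yⁿ` both lie in `K + (u)`, then `u` is a unit of
`K[x,y]` (a nonzero constant). -/
theorem unit_of_powers_in_ideal (K : Type*) [Field K] (n : ℕ) (hn : 1 ≤ n)
    (u : MvPolynomial (Fin 2) K)
    (hx : ∃ (c : K) (h : MvPolynomial (Fin 2) K), (X 0 : MvPolynomial (Fin 2) K) ^ n = C c + u * h)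
    (hy : ∃ (c : K) (h : MvPolynomial (Fin 2) K), (X 1 : MvPolynomial (Fin 2) K) ^ n = C c + u * h) :
    IsUnit u := by
  classical
  obtain ⟨c, h, heqx⟩ := hx
  obtain ⟨d, g, heqy⟩ := hy
  -- degree of u in variable 0 is zero
  have h0 : degreeOf 0 u = 0 := aux_degreeOf_zero K n hn u g d heqy
  -- degree of u in variable 1 is zero, by swapping variables
  have h1 : degreeOf 1 u = 0 := by
    have heq' : (X 1 : MvPolynomial (Fin 2) K) ^ n
        = C c + rename (Equiv.swap (0 : Fin 2) 1) u * rename (Equiv.swap (0 : Fin 2) 1) h := by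
      have := congrArg (rename (Equiv.swap (0 : Fin 2) 1)) heqx
      simpa [map_pow, Equiv.swap_apply_left] using this
    have := aux_degreeOf_zero K n hn _ _ c heq'
    have hr : degreeOf (Equiv.swap (0 : Fin 2) 1 1) (rename (Equiv.swap (0 : Fin 2) 1) u)
        = degreeOf 1 u := degreeOf_rename_of_injective (Equiv.swap (0 : Fin 2) 1).injective 1
    rw [Equiv.swap_apply_right] at hr
    rw [← hr, this]
  -- hence u is a constant
  have htot : u.totalDegree = 0 := by
    rw [totalDegree_eq_zero_iff]
    intro m hm x
    have hx0 : m 0 ≤ 0 := h0 ▸ monomial_le_degreeOf 0 hm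
    have hx1 : m 1 ≤ 0 := h1 ▸ monomial_le_degreeOf 1 hm
    fin_cases x
    · exact Nat.le_zero.mp hx0
    · exact Nat.le_zero.mp hx1
  have huc : u = C (coeff 0 u) := by
    ext m
    by_cases hm : m = 0
    · simp [hm]
    · have : coeff m u = 0 := by
        by_contra hc
        have hm' : m ∈ u.support := mem_support_iff.mpr hc
        have := (totalDegree_eq_zero_iff _ u).mp htot m hm'
        apply hm
        ext x
        exact this x
      rw [this, coeff_C, if_neg (Ne.symm hm)]
  -- u is nonzero since X 0 ^ n - C c ≠ 0
  have hune : coeff 0 u ≠ 0 := by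
    intro h0
    have hu0 : u = 0 := by rw [huc, h0, map_zero]
    have : (X 0 : MvPolynomial (Fin 2) K) ^ n = C c := by
      rw [heqx, hu0, zero_mul, add_zero]
    have ht := congrArg totalDegree this
    rw [totalDegree_C, totalDegree_X_pow] at ht
    omega
  rw [huc]
  exact (isUnit_iff_ne_zero.mpr hune).map C
end

section
/- Let K be a field of characteristic zero and n ≥ 2. If φ is a K-algebra automorphism of K[x,y] such that φ(x^{n−i} y^i) = x^{n−i} y^i for all 0 ≤ i ≤ n, then there exists ε ∈ K with ε^n = 1 such that φ(x) = ε x and φ(y) = ε y. -/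
open MvPolynomial

/-!
Fixing `x^n` and `y^n` forces `φ x = ε x` and `φ y = δ y` with `ε^n = δ^n = 1`, because `x` and `y`
are prime and the units of `K[x,y]` are the nonzero constants. Fixing `x^{n-1} y` then gives
`ε^{n-1} δ = 1`, hence `δ = ε`.
-/

namespace MvPolynomial

variable {σ R : Type*} [CommRing R] [IsDomain R]

theorem exists_eq_C_mul_X_of_pow_eq_X_pow {n : ℕ} (hn : n ≠ 0) {i : σ} {P : MvPolynomial σ R}
    (hP : P ^ n = X i ^ n) : ∃ ε : R, ε ^ n = 1 ∧ P = C ε * X i := by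
  obtain ⟨Q, rfl⟩ : X i ∣ P := X_prime.dvd_of_dvd_pow (by rw [hP]; exact dvd_pow_self _ hn)
  have hQ : Q ^ n = 1 :=
    mul_left_cancel₀ (pow_ne_zero n (X_ne_zero i)) (by rw [← mul_pow, hP, mul_one])
  obtain ⟨ε, -, rfl⟩ := isUnit_iff_eq_C_of_isReduced.mp (IsUnit.of_pow_eq_one hQ hn)
  exact ⟨ε, C_injective σ R (by rw [map_pow, hQ, map_one]), mul_comm _ _⟩

end MvPolynomial

theorem eq_of_pow_eq_one_of_pow_pred_mul_eq_one {M : Type*} [CommMonoid M] {n : ℕ} (hn : n ≠ 0)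
    {ε δ : M} (hε : ε ^ n = 1) (hδ : ε ^ (n - 1) * δ = 1) : δ = ε := by
  calc δ = ε ^ n * δ := by rw [hε, one_mul]
    _ = ε * (ε ^ (n - 1) * δ) := by rw [← mul_assoc, ← pow_succ', Nat.sub_add_cancel (by omega)]
    _ = ε := by rw [hδ, mul_one]

theorem fixing_veronese_is_scalar_general (K : Type*) [Field K] (n : ℕ) (hn : 2 ≤ n)
    (φ : MvPolynomial (Fin 2) K ≃ₐ[K] MvPolynomial (Fin 2) K)
    (h : ∀ i ≤ n, φ (X 0 ^ (n - i) * X 1 ^ i) = X 0 ^ (n - i) * X 1 ^ i) :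
    ∃ ε : K, ε ^ n = 1 ∧ φ (X 0) = C ε * X 0 ∧ φ (X 1) = C ε * X 1 := by
  have hn0 : n ≠ 0 := by omega
  have hx : φ (X 0) ^ n = X 0 ^ n := by simpa using h 0 n.zero_le
  have hy : φ (X 1) ^ n = X 1 ^ n := by simpa using h n le_rfl
  obtain ⟨ε, hε, hφx⟩ := exists_eq_C_mul_X_of_pow_eq_X_pow hn0 hx
  obtain ⟨δ, -, hφy⟩ := exists_eq_C_mul_X_of_pow_eq_X_pow hn0 hy
  have hm : (X 0 ^ (n - 1) * X 1 : MvPolynomial (Fin 2) K) ≠ 0 :=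
    mul_ne_zero (pow_ne_zero _ (X_ne_zero 0)) (X_ne_zero 1)
  have hεδ : ε ^ (n - 1) * δ = 1 := by
    rw [← C_inj (σ := Fin 2), map_one, ← mul_eq_right₀ hm]
    calc C (ε ^ (n - 1) * δ) * (X 0 ^ (n - 1) * X 1) = φ (X 0 ^ (n - 1) * X 1) := by
          rw [map_mul φ, map_pow φ, hφx, hφy, C_mul, C_pow]
          ring
      _ = X 0 ^ (n - 1) * X 1 := by simpa using h 1 (by omega)
  exact ⟨ε, hε, hφx, eq_of_pow_eq_one_of_pow_pred_mul_eq_one hn0 hε hεδ ▸ hφy⟩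

/-- An automorphism of `K[x,y]` fixing all `x^{n-i} y^i` (`0 ≤ i ≤ n`)
is the scalar automorphism `x ↦ εx, y ↦ εy` for some `n`-th root of unity `ε`. -/
theorem fixing_veronese_is_scalar (K : Type*) [Field K] [CharZero K] (n : ℕ) (hn : 2 ≤ n)
    (φ : MvPolynomial (Fin 2) K ≃ₐ[K] MvPolynomial (Fin 2) K)
    (h : ∀ i ≤ n, φ (X 0 ^ (n - i) * X 1 ^ i) = X 0 ^ (n - i) * X 1 ^ i) :
    ∃ ε : K, ε ^ n = 1 ∧ φ (X 0) = C ε * X 0 ∧ φ (X 1) = C ε * X 1 :=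
  fixing_veronese_is_scalar_general K n hn φ h
end
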